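/- arXiv:2601.02518 — 4 statements merged into one kernel-verified Lean document; each statement's English description precedes it below -/
import Mathlib

section
/- Let r be a positive integer and M ≥ 0 an integer with 2^M > r. Then for every integer k with 1 ≤ k ≤ r−1, there exists t ∈ {0,1,…,M} such that the least residue of k·2^t modulo r lies in the interval [r/4, 3r/4]. -/
/-- Doubling lemma: if `2^M > r` then for every `1 ≤ k ≤ r-1` there is `t ≤ M`
with the least residue of `k·2^t` mod `r` in `[r/4, 3r/4]`. -/
theorem stmt_0 (r : ℕ) (hr : 0 < r) (M : ℕ) (h2M : r < 2 ^ M)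
    (k : ℕ) (hk1 : 1 ≤ k) (hk2 : k ≤ r - 1) :
    ∃ t : ℕ, t ≤ M ∧
      (r : ℚ) / 4 ≤ ((k * 2 ^ t) % r : ℕ) ∧
      (((k * 2 ^ t) % r : ℕ) : ℚ) ≤ 3 * (r : ℚ) / 4 := by
  by_contra hcon
  push_neg at hcon
  -- Translate to natural-number inequalities
  have H : ∀ t, t ≤ M → 4 * ((k * 2 ^ t) % r) < r ∨ 3 * r < 4 * ((k * 2 ^ t) % r) := by
    intro t ht
    by_contra h
    push_neg at h
    obtain ⟨h1, h2⟩ := h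
    have hA : (r : ℚ) / 4 ≤ ((k * 2 ^ t) % r : ℕ) := by
      rw [div_le_iff₀ (by norm_num)]
      exact_mod_cast by linarith [ (Nat.cast_le (α := ℚ)).2 h1 ] 
    have hB := hcon t ht hA
    have h2' : ((4 * ((k * 2 ^ t) % r) : ℕ) : ℚ) ≤ ((3 * r : ℕ) : ℚ) := Nat.cast_le.2 h2
    push_cast at h2'
    linarith
  -- Invariant: the distance to both 0 and r is at least 2^t
  have key : ∀ t, t ≤ M → 2 ^ t ≤ (k * 2 ^ t) % r ∧ (k * 2 ^ t) % r + 2 ^ t ≤ r := by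
    intro t
    induction t with
    | zero =>
      intro _
      have : k % r = k := Nat.mod_eq_of_lt (by omega)
      simp [this]; omega
    | succ n ih =>
      intro hn
      obtain ⟨h1, h2⟩ := ih (by omega)
      set a := (k * 2 ^ n) % r with ha
      have hb : (k * 2 ^ (n + 1)) % r = (2 * a) % r := by
        rw [ha, pow_succ, show k * (2 ^ n * 2) = 2 * (k * 2 ^ n) by ring,
          Nat.mul_mod 2 (k * 2 ^ n) r, Nat.mul_mod 2 ((k * 2 ^ n) % r) r, Nat.mod_mod_of_dvd]
        exact dvd_refl r
      have halt : a < r := Nat.mod_lt _ hr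
      rcases H n (by omega) with hc | hc
      · -- small case: 4a < r, so 2a < r
        have : (2 * a) % r = 2 * a := Nat.mod_eq_of_lt (by omega)
        rw [hb, this]
        constructor
        · rw [pow_succ]; omega
        · rw [pow_succ]; omega
      · -- large case: 3r < 4a, so r ≤ 2a < 2r
        have hge : r ≤ 2 * a := by omega
        have : (2 * a) % r = 2 * a - r := by
          rw [Nat.mod_eq_sub_mod hge]
          exact Nat.mod_eq_of_lt (by omega)
        rw [hb, this]
        constructor
        · rw [pow_succ]; omega
        · rw [pow_succ]; omega
  obtain ⟨hM1, hM2⟩ := key M le_rfl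
  have : (k * 2 ^ M) % r < r := Nat.mod_lt _ hr
  omega
end

section
/- Let r, M, k be integers with 1 ≤ k ≤ r−1 and suppose that for all t with 0 ≤ t ≤ M the least residue a_t of k·2^t mod r satisfies a_t < r/4 or a_t > 3r/4. Define b_t = min(a_t, r − a_t). Then b_{t+1} = 2·b_t for all 0 ≤ t ≤ M−1, and hence b_M = 2^M · b_0 ≥ 2^M. -/
/-- If all residues `a_t = k·2^t mod r` avoid the middle half `[r/4, 3r/4]`
for `0 ≤ t ≤ M`, then `b_t = min(a_t, r - a_t)` doubles at each step, so
`b_M = 2^M · b_0 ≥ 2^M`. -/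
theorem stmt_1 (r M k : ℕ) (hk1 : 1 ≤ k) (hk2 : k ≤ r - 1)
    (h : ∀ t : ℕ, t ≤ M →
      ((((k * 2 ^ t) % r : ℕ) : ℚ) < (r : ℚ) / 4 ∨
        3 * (r : ℚ) / 4 < (((k * 2 ^ t) % r : ℕ) : ℚ))) :
    (∀ t : ℕ, t ≤ M - 1 →
      min ((k * 2 ^ (t + 1)) % r) (r - (k * 2 ^ (t + 1)) % r)
        = 2 * min ((k * 2 ^ t) % r) (r - (k * 2 ^ t) % r)) ∧
    min ((k * 2 ^ M) % r) (r - (k * 2 ^ M) % r)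
      = 2 ^ M * min ((k * 2 ^ 0) % r) (r - (k * 2 ^ 0) % r) ∧
    2 ^ M ≤ min ((k * 2 ^ M) % r) (r - (k * 2 ^ M) % r) := by
  have hr : 2 ≤ r := by omega
  have hr0 : 0 < r := by omega
  -- single doubling step
  have step : ∀ t : ℕ, t ≤ M →
      min ((k * 2 ^ (t + 1)) % r) (r - (k * 2 ^ (t + 1)) % r)
        = 2 * min ((k * 2 ^ t) % r) (r - (k * 2 ^ t) % r) := by
    intro t ht
    set a : ℕ := (k * 2 ^ t) % r with ha
    have haltr : a < r := Nat.mod_lt _ hr0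
    have hcond : 4 * a < r ∨ 3 * r < 4 * a := by
      rcases h t ht with h1 | h1
      · left
        have : (4 * a : ℚ) < r := by linarith
        exact_mod_cast this
      · right
        have : (3 * r : ℚ) < 4 * a := by linarith
        exact_mod_cast this
    have hmod : (k * 2 ^ (t + 1)) % r = (2 * a) % r := by
      have h2 : k * 2 ^ (t + 1) = 2 * (k * 2 ^ t) := by ring
      simp [h2, ha, Nat.mul_mod, Nat.mod_mod]
    rw [hmod]
    rcases hcond with hc | hc
    · have h2a : (2 * a) % r = 2 * a := Nat.mod_eq_of_lt (by omega)
      rw [h2a]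
      omega
    · have h2a : (2 * a) % r = 2 * a - r := by
        rw [Nat.mod_eq_sub_mod (by omega)]
        exact Nat.mod_eq_of_lt (by omega)
      rw [h2a]
      omega
  have key : ∀ t : ℕ, t ≤ M →
      min ((k * 2 ^ t) % r) (r - (k * 2 ^ t) % r)
        = 2 ^ t * min ((k * 2 ^ 0) % r) (r - (k * 2 ^ 0) % r) := by
    intro t
    induction t with
    | zero => intro _; simp
    | succ n ih =>
      intro hn
      rw [step n (by omega), ih (by omega), pow_succ]
      ring
  refine ⟨fun t ht => step t (by omega), key M le_rfl, ?_⟩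
  rw [key M le_rfl]
  have hklt : k < r := by omega
  have hk0 : (k * 2 ^ 0) % r = k := by simp [Nat.mod_eq_of_lt hklt]
  rw [hk0]
  have : 1 ≤ min k (r - k) := by omega
  calc 2 ^ M = 2 ^ M * 1 := by ring
    _ ≤ 2 ^ M * min k (r - k) := Nat.mul_le_mul_left _ this
end

section
/- Fix integers r ≥ 1, M ≥ 0 with 2^M > r. With λ_k = (1 + (1/(M+1)) ∑_{t=0}^{M} cos(2πk2^t/r))/2, for every k ∈ {1,…,r−1} one has λ_k ≤ 1 − 1/(2(M+1)). -/
/-!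
Replace `k` by `d = min k (r - k)`: for integer `n`, `cos (2π (r - k) n / r) = cos (2π k n / r)`,
and `1 ≤ d ≤ r / 2`. Doubling `d` at most `M` times lands `d 2^t` in `[r/4, r/2]`,
because `r < 2^M`; there `cos (2π d 2^t / r) ≤ 0`. Bounding the other `M` cosines by `1`
gives `∑ cos ≤ M`, which is the claim.
-/

open Real

theorem exists_le_four_mul_mul_two_pow_le {d r : ℕ} (M : ℕ) (h2d : 2 * d ≤ r)
    (hr : r ≤ 4 * (d * 2 ^ M)) : ∃ t ≤ M, r ≤ 4 * (d * 2 ^ t) ∧ 2 * (d * 2 ^ t) ≤ r := by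
  induction M with
  | zero => exact ⟨0, le_rfl, hr, by simpa using h2d⟩
  | succ M ih =>
    by_cases h : 2 * (d * 2 ^ (M + 1)) ≤ r
    · exact ⟨M + 1, le_rfl, hr, h⟩
    · rw [pow_succ] at h
      obtain ⟨t, htM, hlo, hhi⟩ := ih (by linarith)
      exact ⟨t, htM.trans M.le_succ, hlo, hhi⟩

theorem Real.cos_two_pi_mul_div_nonpos {x r : ℝ} (hr : 0 < r) (hlo : r ≤ 4 * x)
    (hhi : 4 * x ≤ 3 * r) : cos (2 * π * x / r) ≤ 0 := by
  apply cos_nonpos_of_pi_div_two_le_of_le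
  · rw [le_div_iff₀ hr]
    nlinarith [pi_pos]
  · rw [div_le_iff₀ hr]
    nlinarith [pi_pos]

theorem Real.cos_two_pi_mul_sub_mul_div {r : ℝ} (hr : r ≠ 0) (d : ℝ) (n : ℕ) :
    cos (2 * π * (r - d) * n / r) = cos (2 * π * d * n / r) := by
  have : 2 * π * (r - d) * n / r = n * (2 * π) - 2 * π * d * n / r := by
    field_simp
  rw [this, cos_nat_mul_two_pi_sub]

theorem exists_cos_two_pi_mul_div_eq_of_two_mul_le {r k : ℕ} (hk1 : 1 ≤ k) (hk2 : k ≤ r - 1) :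
    ∃ d : ℕ, 1 ≤ d ∧ 2 * d ≤ r ∧
      ∀ n : ℕ, cos (2 * π * k * n / r) = cos (2 * π * d * n / r) := by
  rcases le_total (2 * k) r with h | h
  · exact ⟨k, hk1, h, fun _ => rfl⟩
  · refine ⟨r - k, by omega, by omega, fun n => ?_⟩
    have hr : (r : ℝ) ≠ 0 := by norm_cast; omega
    rw [← cos_two_pi_mul_sub_mul_div hr, Nat.cast_sub (by omega)]

theorem Finset.sum_le_card_sub_one_of_le_one {ι : Type*} {s : Finset ι} {f : ι → ℝ}
    (hf : ∀ i ∈ s, f i ≤ 1) {j : ι} (hj : j ∈ s) (hj0 : f j ≤ 0) :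
    ∑ i ∈ s, f i ≤ s.card - 1 := by
  classical
  rw [← add_sum_erase s f hj]
  have hrest : ∑ i ∈ s.erase j, f i ≤ (s.erase j).card := by
    simpa using sum_le_sum fun i hi => hf i (mem_of_mem_erase hi)
  rw [card_erase_of_mem hj, Nat.cast_sub (card_pos.2 ⟨j, hj⟩)] at hrest
  push_cast at hrest
  linarith

/-- Eigenvalue gap: if `2^M > r`, then for every `k ∈ {1,…,r−1}` the eigenvalue
`λ_k = (1 + (1/(M+1)) ∑_t cos(2πk2^t/r))/2` satisfies `λ_k ≤ 1 − 1/(2(M+1))`. -/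
theorem stmt_6 (r M k : ℕ) (h2M : r < 2 ^ M) (hk1 : 1 ≤ k) (hk2 : k ≤ r - 1) :
    (1 + (1 / ((M : ℝ) + 1)) *
        ∑ t ∈ Finset.range (M + 1), Real.cos (2 * Real.pi * k * 2 ^ t / r)) / 2
      ≤ 1 - 1 / (2 * ((M : ℝ) + 1)) := by
  obtain ⟨d, hd1, h2d, hcos⟩ := exists_cos_two_pi_mul_div_eq_of_two_mul_le hk1 hk2
  obtain ⟨t₀, ht₀M, hlo, hhi⟩ := exists_le_four_mul_mul_two_pow_le M h2d (by nlinarith)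
  have hneg : cos (2 * π * d * 2 ^ t₀ / r) ≤ 0 := by
    rw [mul_assoc _ (d : ℝ)]
    exact cos_two_pi_mul_div_nonpos (by norm_cast; omega) (by exact_mod_cast hlo)
      (by norm_cast; omega)
  have hsum : ∑ t ∈ Finset.range (M + 1), cos (2 * π * k * 2 ^ t / r) ≤ M := by
    rw [Finset.sum_congr rfl fun t _ => by exact_mod_cast hcos (2 ^ t)]
    simpa using Finset.sum_le_card_sub_one_of_le_one (f := fun t => cos (2 * π * d * 2 ^ t / r))
      (fun t _ => cos_le_one _) (Finset.mem_range.2 (Nat.lt_succ_of_le ht₀M)) hneg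
  have hM : (0 : ℝ) < M + 1 := by positivity
  rw [div_le_iff₀ two_pos, one_div_mul_eq_div]
  calc 1 + (∑ t ∈ Finset.range (M + 1), cos (2 * π * k * 2 ^ t / r)) / (M + 1)
      ≤ 1 + M / (M + 1) := by gcongr
    _ = (1 - 1 / (2 * (M + 1))) * 2 := by field_simp; ring
end

section
/- Fix integers r ≥ 1, M ≥ 0 with 2^M > r. Let W be the half-lazy dyadic walk operator on ℤ/rℤ, p₀ = δ₀, and pₙ = Wⁿp₀. Then for all n ≥ 0, |pₙ(0) − 1/r| ≤ (1 − 1/(2(M+1)))ⁿ. -/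
open Finset

/-- The dyadic walk operator on `ℤ/rℤ`. -/
noncomputable def dyadicP (r M : ℕ) (f : ZMod r → ℝ) : ZMod r → ℝ :=
  fun j => (1 / (2 * ((M : ℝ) + 1))) *
    ∑ t ∈ Finset.range (M + 1), (f (j + 2 ^ t) + f (j - 2 ^ t))

/-- The half-lazy dyadic walk operator `W = (I+P)/2` on `ℤ/rℤ`. -/
noncomputable def dyadicW (r M : ℕ) (f : ZMod r → ℝ) : ZMod r → ℝ :=
  fun j => (f j + dyadicP r M f j) / 2

/-! The functions `cosChar k j = cos (2π k j / r)` are eigenfunctions of `P`, with eigenvalue the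
average `μ_k` of `cos (2π k 2^t / r)` over `t ≤ M`, and `δ₀ = r⁻¹ ∑ₖ cosChar k`. Hence
`pₙ(0) = r⁻¹ ∑ₖ ((1 + μ_k) / 2)ⁿ`, whose `k = 0` term is `1 / r`. For `k ≠ 0`, doubling `k`
doubles its distance to `0` in `ℤ/rℤ` as long as that distance is below `r / 4`; since `2^M > r`
this must fail for some `t ≤ M`, where then `cos (2π k 2^t / r) ≤ 0`. This gives
`-1 ≤ μ_k ≤ M / (M + 1)`, i.e. `0 ≤ (1 + μ_k) / 2 ≤ 1 - 1 / (2(M + 1))`. -/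

open Real

namespace ZMod

variable {n : ℕ} [NeZero n]

lemma valMinAbs_two_mul_of_four_mul_abs_lt {x : ZMod n} (h : 4 * |x.valMinAbs| < n) :
    (2 * x).valMinAbs = 2 * x.valMinAbs := by
  have h4 : |4 * x.valMinAbs| < n := by rwa [abs_mul, abs_of_pos (by norm_num : (0 : ℤ) < 4)]
  obtain ⟨hlo, hhi⟩ := abs_lt.mp h4
  rw [valMinAbs_spec]
  exact ⟨by push_cast [coe_valMinAbs]; rfl, by linarith, by linarith⟩

lemma exists_le_four_mul_abs_valMinAbs_two_pow_mul {M : ℕ} (hn : n < 2 ^ M) {x : ZMod n}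
    (hx : x ≠ 0) : ∃ t ≤ M, (n : ℤ) ≤ 4 * |(x * 2 ^ t).valMinAbs| := by
  by_contra! hsmall
  have hdouble : ∀ t ≤ M, (x * 2 ^ t).valMinAbs = x.valMinAbs * 2 ^ t := by
    intro t ht
    induction t with
    | zero => simp
    | succ t ih =>
      rw [pow_succ', mul_left_comm, valMinAbs_two_mul_of_four_mul_abs_lt (hsmall t (by omega)),
        ih (by omega), pow_succ', mul_left_comm]
  have hx1 : 1 ≤ |x.valMinAbs| := Int.one_le_abs ((valMinAbs_eq_zero x).not.mpr hx)
  have hsmallM := hsmall M le_rfl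
  rw [hdouble M le_rfl, abs_mul, abs_pow, abs_two] at hsmallM
  have hn' : (n : ℤ) < 2 ^ M := by exact_mod_cast hn
  nlinarith

lemma toCircle_re_eq_cos (x : ZMod n) :
    (toCircle x : ℂ).re = Real.cos (2 * π * x.valMinAbs / n) := by
  conv_lhs => rw [← coe_valMinAbs x, toCircle_intCast]
  rw [← Complex.exp_ofReal_mul_I_re]
  congr 2
  push_cast
  ring

lemma toCircle_re_nonpos {x : ZMod n} (hx : (n : ℤ) ≤ 4 * |x.valMinAbs|) :
    (toCircle x : ℂ).re ≤ 0 := by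
  have hn : (0 : ℝ) < n := by exact_mod_cast (NeZero.pos n)
  have hlo : (n : ℝ) ≤ 4 * |(x.valMinAbs : ℝ)| := by exact_mod_cast hx
  have hhi : 2 * |(x.valMinAbs : ℝ)| ≤ n := by
    have hhalf := natAbs_valMinAbs_le x
    have : 2 * |x.valMinAbs| ≤ n := by rw [Int.abs_eq_natAbs]; omega
    exact_mod_cast this
  rw [toCircle_re_eq_cos, ← Real.cos_abs, abs_div, abs_mul, abs_of_pos (by positivity : 0 < 2 * π),
    Nat.abs_cast]
  apply Real.cos_nonpos_of_pi_div_two_le_of_le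
  · rw [le_div_iff₀ hn]; nlinarith [pi_pos]
  · rw [div_le_iff₀ hn]; nlinarith [pi_pos]

end ZMod

lemma AddChar.re_map_add_add_re_map_sub {G : Type*} [AddCommGroup G] (ψ : AddChar G Circle)
    (a b : G) : (ψ (a + b) : ℂ).re + (ψ (a - b) : ℂ).re = 2 * (ψ b : ℂ).re * (ψ a : ℂ).re := by
  rw [map_add_eq_mul, map_sub_eq_div, div_eq_mul_inv, Circle.coe_mul, Circle.coe_mul,
    Circle.coe_inv_eq_conj]
  simp only [Complex.mul_re, Complex.conj_re, Complex.conj_im]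
  ring

lemma abs_sum_pow_div_card_sub_le {ι : Type*} [Fintype ι] [DecidableEq ι] {lam : ι → ℝ} {i₀ : ι}
    {Λ : ℝ} (hΛ : 0 ≤ Λ) (h₀ : lam i₀ = 1) (hle : ∀ i ≠ i₀, |lam i| ≤ Λ) (n : ℕ) :
    |(∑ i, lam i ^ n) / Fintype.card ι - 1 / Fintype.card ι| ≤ Λ ^ n := by
  have hcard : (0 : ℝ) < Fintype.card ι := by exact_mod_cast Fintype.card_pos_iff.mpr ⟨i₀⟩
  have hrest : |∑ i ∈ univ.erase i₀, lam i ^ n| ≤ Fintype.card ι * Λ ^ n := calc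
    _ ≤ ∑ i ∈ univ.erase i₀, Λ ^ n := (abs_sum_le_sum_abs _ _).trans <| sum_le_sum fun i hi => by
          rw [abs_pow]; exact pow_le_pow_left₀ (abs_nonneg _) (hle i (ne_of_mem_erase hi)) n
    _ ≤ ∑ i, Λ ^ n := sum_le_sum_of_subset_of_nonneg (erase_subset _ _) fun _ _ _ => by positivity
    _ = Fintype.card ι * Λ ^ n := by rw [sum_const, card_univ, nsmul_eq_mul]
  rw [← sub_div, ← sum_erase_add _ _ (mem_univ i₀), h₀, one_pow, add_sub_cancel_right, abs_div,
    abs_of_pos hcard, div_le_iff₀ hcard, mul_comm]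
  exact hrest

noncomputable def cosChar {r : ℕ} [NeZero r] (k j : ZMod r) : ℝ := (ZMod.toCircle (k * j) : ℂ).re

noncomputable def dyadicPEigenvalue (M : ℕ) {r : ℕ} [NeZero r] (k : ZMod r) : ℝ :=
  (∑ t ∈ range (M + 1), (ZMod.toCircle (k * 2 ^ t) : ℂ).re) / (M + 1)

noncomputable def dyadicWLinear (r M : ℕ) : Module.End ℝ (ZMod r → ℝ) where
  toFun := dyadicW r M
  map_add' f g := by
    ext j
    simp only [dyadicW, dyadicP, Pi.add_apply, sum_add_distrib]
    ring
  map_smul' c f := by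
    ext j
    simp only [dyadicW, dyadicP, Pi.smul_apply, smul_eq_mul, RingHom.id_apply, ← mul_add,
      ← mul_sum]
    ring

section

variable {r : ℕ} [NeZero r]

@[simp]
lemma cosChar_zero_right (k : ZMod r) : cosChar k 0 = 1 := by simp [cosChar]

lemma cosChar_ne_zero (k : ZMod r) : cosChar k ≠ 0 :=
  fun h => one_ne_zero ((cosChar_zero_right k).symm.trans (congr_fun h 0))

lemma dyadicP_cosChar (M : ℕ) (k : ZMod r) :
    dyadicP r M (cosChar k) = dyadicPEigenvalue M k • cosChar k := by
  ext j
  have hpair (t : ℕ) : cosChar k (j + 2 ^ t) + cosChar k (j - 2 ^ t)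
      = 2 * (ZMod.toCircle (k * 2 ^ t) : ℂ).re * cosChar k j := by
    simp only [cosChar, mul_add, mul_sub, AddChar.re_map_add_add_re_map_sub]
  simp only [dyadicP, dyadicPEigenvalue, hpair, Pi.smul_apply, smul_eq_mul, ← sum_mul,
    ← mul_sum]
  field_simp

lemma dyadicW_cosChar (M : ℕ) (k : ZMod r) :
    dyadicW r M (cosChar k) = ((1 + dyadicPEigenvalue M k) / 2) • cosChar k := by
  ext j
  simp only [dyadicW, dyadicP_cosChar, Pi.smul_apply, smul_eq_mul]
  ring

lemma sum_cosChar (j : ZMod r) : ∑ k, cosChar k j = if j = 0 then (r : ℝ) else 0 := by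
  have horth := AddChar.sum_mulShift j (ZMod.isPrimitive_stdAddChar r)
  rw [ZMod.card] at horth
  simp only [cosChar, ← Complex.re_sum, ← ZMod.stdAddChar_apply, horth]
  split_ifs <;> simp

lemma indicator_zero_eq_sum_cosChar :
    (fun j : ZMod r => if j = 0 then (1 : ℝ) else 0) = ∑ k, (r : ℝ)⁻¹ • cosChar k := by
  have hr : (r : ℝ) ≠ 0 := NeZero.ne _
  ext j
  rw [Finset.sum_apply]
  simp only [Pi.smul_apply, smul_eq_mul, ← mul_sum, sum_cosChar]
  split_ifs <;> simp [hr]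

lemma dyadicW_iterate_indicator_zero_apply_zero (M n : ℕ) :
    (dyadicW r M)^[n] (fun j => if j = 0 then (1 : ℝ) else 0) 0
      = (∑ k : ZMod r, ((1 + dyadicPEigenvalue M k) / 2) ^ n) / r := by
  have heigen (k : ZMod r) :
      (dyadicWLinear r M).HasEigenvector ((1 + dyadicPEigenvalue M k) / 2) (cosChar k) :=
    Module.End.hasEigenvector_iff.mpr
      ⟨Module.End.mem_eigenspace_iff.mpr (dyadicW_cosChar M k), cosChar_ne_zero k⟩
  change (⇑(dyadicWLinear r M))^[n] _ 0 = _
  rw [← Module.End.coe_pow, indicator_zero_eq_sum_cosChar, map_sum, Finset.sum_apply, sum_div]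
  simp only [map_smul, (heigen _).pow_apply, Pi.smul_apply, smul_eq_mul, cosChar_zero_right]
  field_simp

lemma neg_one_le_dyadicPEigenvalue (M : ℕ) (k : ZMod r) : -1 ≤ dyadicPEigenvalue M k := by
  have hterm (t : ℕ) (_ : t ∈ range (M + 1)) : -1 ≤ (ZMod.toCircle (k * 2 ^ t) : ℂ).re :=
    (abs_le.mp ((Complex.abs_re_le_norm _).trans_eq (Circle.norm_coe _))).1
  have hsum := card_nsmul_le_sum _ _ _ hterm
  rw [card_range, nsmul_eq_mul] at hsum
  rw [dyadicPEigenvalue, le_div_iff₀ (by positivity)]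
  push_cast at hsum
  linarith

lemma dyadicPEigenvalue_le {M : ℕ} (h2M : r < 2 ^ M) {k : ZMod r} (hk : k ≠ 0) :
    dyadicPEigenvalue M k ≤ M / (M + 1) := by
  obtain ⟨t₀, ht₀, hfar⟩ := ZMod.exists_le_four_mul_abs_valMinAbs_two_pow_mul h2M hk
  have hmem : t₀ ∈ range (M + 1) := mem_range.mpr (by omega)
  have hrest := sum_le_card_nsmul ((range (M + 1)).erase t₀)
    (fun t => (ZMod.toCircle (k * 2 ^ t) : ℂ).re) 1
    fun t _ => (Complex.re_le_norm _).trans_eq (Circle.norm_coe _)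
  rw [card_erase_of_mem hmem, card_range, nsmul_eq_mul] at hrest
  have hneg := ZMod.toCircle_re_nonpos hfar
  rw [dyadicPEigenvalue, div_le_div_iff_of_pos_right (by positivity), ← sum_erase_add _ _ hmem]
  push_cast at hrest
  linarith

lemma dyadicPEigenvalue_zero (M : ℕ) : dyadicPEigenvalue M (0 : ZMod r) = 1 := by
  simp only [dyadicPEigenvalue, zero_mul, AddChar.map_zero_eq_one, Circle.coe_one,
    Complex.one_re, sum_const, card_range, nsmul_eq_mul, mul_one]
  push_cast
  exact div_self (by positivity)

lemma abs_dyadicWEigenvalue_le {M : ℕ} (h2M : r < 2 ^ M) {k : ZMod r} (hk : k ≠ 0) :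
    |(1 + dyadicPEigenvalue M k) / 2| ≤ 1 - 1 / (2 * ((M : ℝ) + 1)) := by
  have hlo := neg_one_le_dyadicPEigenvalue M k
  have hhi := dyadicPEigenvalue_le h2M hk
  have hM : (M : ℝ) / (M + 1) = 1 - 2 * (1 / (2 * ((M : ℝ) + 1))) := by field_simp; ring
  rw [abs_of_nonneg (by linarith)]
  linarith

end

/-- Heat-kernel convergence: for the half-lazy dyadic walk started at δ₀,
`|pₙ(0) − 1/r| ≤ (1 − 1/(2(M+1)))ⁿ` for all `n ≥ 0`, provided `2^M > r`. -/
theorem stmt_7 (r M : ℕ) (hr : 1 ≤ r) (h2M : r < 2 ^ M) (n : ℕ) :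
    |((dyadicW r M)^[n] (fun j => if j = 0 then (1 : ℝ) else 0)) 0 - 1 / r|
      ≤ (1 - 1 / (2 * ((M : ℝ) + 1))) ^ n := by
  have : NeZero r := ⟨by omega⟩
  have hΛ : 0 ≤ 1 - 1 / (2 * ((M : ℝ) + 1)) := by
    rw [sub_nonneg, div_le_one (by positivity)]
    linarith [M.cast_nonneg (α := ℝ)]
  have hbound := abs_sum_pow_div_card_sub_le hΛ (by rw [dyadicPEigenvalue_zero]; norm_num)
    (fun k hk => abs_dyadicWEigenvalue_le h2M hk) n
  rwa [ZMod.card, ← dyadicW_iterate_indicator_zero_apply_zero] at hbound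
end
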